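/- Let F be a field of characteristic 0 and n, d ≥ 1. Let f be a nonzero element of the unitization of F_{Ā,C̄}[X] whose F_{Ā,C̄}[X]-component f₀ has degree ≤ d and satisfies f₀ ∉ I_comm or f has nonzero scalar component (i.e., the image of f in the unitization of F_{Ā,C}[X] is nonzero). Then f is not a polynomial identity for the commutative nonassociative algebra C_d: there exist b_1, …, b_n ∈ C_d such that the evaluation of f at (b_1,…,b_n) — via the unique unital F-algebra homomorphism from the unitization of F_{Ā,C̄}[X] to C_d sending x_i ↦ b_i — is nonzero. -/

import Mathlib

/-! Evaluate `f₀` at the generic elements `Z_i` of `A'_d` over `F[z_{i,j,k}]`, where `Z_i` carries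
`z_{i,j,k}` at position `(j, j+1, k)`. A monomial `m` of degree `≤ d` then evaluates to a single
entry, at `(0, deg m, 0)`, equal to the product of the `z_{i,t,l}` over its leaves (the `t`-th leaf
being `x_i` at level `l`). This product determines `m`, since a binary tree is determined by the
sequence of its leaf levels (the leaves below a node at level `s` have Kraft sum `2⁻ˢ`).
In `C'_d` the product `a ∘ b + b ∘ a` expands a monomial into the sum of all its variants, so the
coefficient of the product of `m₀` in the evaluation of `f₀` is the multiplicity of `m₀` among its
own variants times the sum of the coefficients of `f₀` over the `≈`-class of `m₀`. Outside
`I_comm` some class sum is nonzero, so in characteristic `0` this entry is a nonzero polynomial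
and some specialization of the `z`'s does not kill it. The scalar component is untouched by
evaluations inside `C'_d`. -/

noncomputable section

open scoped BigOperators

namespace NAPIT

/-- The list of (leaf label, leaf level) pairs of a nonassociative monomial (element of the
free magma), in left-to-right order, where the root of the monomial is at level `s`. -/
def leafData {n : ℕ} : FreeMagma (Fin n) → ℕ → List (Fin n × ℕ)
  | FreeMagma.of i, s => [(i, s)]
  | FreeMagma.mul x y, s => leafData x (s + 1) ++ leafData y (s + 1)

/-- The degree (number of leaves) of a nonassociative monomial. -/
def degM {n : ℕ} : FreeMagma (Fin n) → ℕ
  | FreeMagma.of _ => 1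
  | FreeMagma.mul x y => degM x + degM y

/-- The depth of a nonassociative monomial (root at level 1; the depth is the maximal level
of a leaf). -/
def depthM {n : ℕ} : FreeMagma (Fin n) → ℕ
  | FreeMagma.of _ => 1
  | FreeMagma.mul x y => max (depthM x) (depthM y) + 1

/-- Evaluation of a nonassociative monomial at `b : Fin n → A`, using `mul` as the product on
`A`; this is the unique magma homomorphism `FreeMagma (Fin n) → (A, mul)` with `x_i ↦ b i`. -/
def evalWith {n : ℕ} {A : Type*} (mul : A → A → A) (b : Fin n → A) : FreeMagma (Fin n) → A
  | FreeMagma.of i => b i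
  | FreeMagma.mul x y => mul (evalWith mul b x) (evalWith mul b y)

/-- The multiset of all variants `m_ε` of a monomial `m`, where `ε` ranges over all choices of
a Boolean for each internal node of `m`, and `m_ε` is obtained from `m` by swapping the two
children at exactly those internal nodes where `ε` is true (counted with multiplicity). -/
def variants {n : ℕ} : FreeMagma (Fin n) → Multiset (FreeMagma (Fin n))
  | FreeMagma.of i => {FreeMagma.of i}
  | FreeMagma.mul x y =>
      (variants x).bind fun x' => (variants y).bind fun y' =>
        {FreeMagma.mul x' y', FreeMagma.mul y' x'}

/-- The underlying module of the algebra `A'_d(R)`: arrays `x[i,j,k]` with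
`i, j ∈ Fin (d+1)`, `k ∈ Fin d` (zero-based; the paper's indices are shifted by one). -/
def Arr (d : ℕ) (R : Type*) : Type _ := Fin (d + 1) → Fin (d + 1) → Fin d → R

namespace Arr

variable {d : ℕ} {R : Type*}

instance instAddCommGroup [AddCommGroup R] : AddCommGroup (Arr d R) :=
  inferInstanceAs (AddCommGroup (Fin (d + 1) → Fin (d + 1) → Fin d → R))

instance instModule {S : Type*} [Semiring S] [AddCommGroup R] [Module S R] :
    Module S (Arr d R) :=
  inferInstanceAs (Module S (Fin (d + 1) → Fin (d + 1) → Fin d → R))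

/-- The bilinear product `∘` of `A'_d(R)`:
`(x ∘ y)[i,j,k] = ∑_{l} x[i,l,k+1] * y[l,j,k+1]` if `k+1` is a legal third index, else `0`. -/
def aprod [CommRing R] (x y : Arr d R) : Arr d R := fun i j k =>
  if h : (k : ℕ) + 1 < d then
    ∑ l : Fin (d + 1), x i l ⟨(k : ℕ) + 1, h⟩ * y l j ⟨(k : ℕ) + 1, h⟩
  else 0

instance instMul [CommRing R] : Mul (Arr d R) := ⟨aprod⟩

end Arr

/-- The algebra `C'_d(R)`: same underlying module as `A'_d(R)`, with the anticommutator
product `a ⊙ b = a ∘ b + b ∘ a`. -/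
def CArr (d : ℕ) (R : Type*) : Type _ := Arr d R

namespace CArr

variable {d : ℕ} {R : Type*}

/-- The identity map `A'_d(R) → C'_d(R)` of underlying modules. -/
def ofArr (x : Arr d R) : CArr d R := x

/-- The identity map `C'_d(R) → A'_d(R)` of underlying modules. -/
def toArr (x : CArr d R) : Arr d R := x

instance instAddCommGroup [AddCommGroup R] : AddCommGroup (CArr d R) :=
  inferInstanceAs (AddCommGroup (Arr d R))

instance instModule {S : Type*} [Semiring S] [AddCommGroup R] [Module S R] :
    Module S (CArr d R) :=
  inferInstanceAs (Module S (Arr d R))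

instance instMul [CommRing R] : Mul (CArr d R) :=
  ⟨fun a b => ofArr (toArr a * toArr b + toArr b * toArr a)⟩

end CArr

/-- The element `Z_i ∈ A'_d(R)`, `R = MvPolynomial (Fin n × Fin d × Fin d) F`, whose
`(j, j+1, k)` entry is the indeterminate `z_{i,j,k}` and whose other entries vanish. -/
def Z (F : Type*) [CommRing F] (n d : ℕ) (i : Fin n) :
    Arr d (MvPolynomial (Fin n × Fin d × Fin d) F) := fun j j' k =>
  if h : (j : ℕ) < d ∧ (j' : ℕ) = (j : ℕ) + 1 then
    MvPolynomial.X (i, ⟨(j : ℕ), h.1⟩, k)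
  else 0

/-- The element `Z_i` regarded as an element of `C'_d(R)`. -/
def ZC (F : Type*) [CommRing F] (n d : ℕ) (i : Fin n) :
    CArr d (MvPolynomial (Fin n × Fin d × Fin d) F) := CArr.ofArr (Z F n d i)

/-- The monomial `∏_{t=1}^{d'} z_{σ_m(t), (t-1) + k1, (l^m_t - 1) + k2}` associated to a
nonassociative monomial `m` of degree `d'` and offsets `k1, k2` (all indices zero-based; the
paper's 1-based offsets are `k1 + 1`, `k2 + 1`).  Indices which would fall out of range are
discarded (this never happens in the intended range of parameters). -/
def monProd (F : Type*) [CommRing F] {n : ℕ} (d : ℕ) (k1 k2 : ℕ) (m : FreeMagma (Fin n)) :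
    MvPolynomial (Fin n × Fin d × Fin d) F :=
  (((leafData m 1).zipIdx.map Prod.swap).map fun p =>
    if h : p.1 + k1 < d ∧ p.2.2 - 1 + k2 < d then
      MvPolynomial.X (p.2.1, ⟨p.1 + k1, h.1⟩, ⟨p.2.2 - 1 + k2, h.2⟩)
    else 0).prod

/-- `ψ(m) = ∑_ε ∏_{t=1}^{d'} z_{σ_{m_ε}(t), t, l^{m_ε}_t}` (1-based), the sum running over all
choices `ε` of a Boolean for each internal node of `m`. -/
def psi (F : Type*) [CommRing F] {n : ℕ} (d : ℕ) (m : FreeMagma (Fin n)) :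
    MvPolynomial (Fin n × Fin d × Fin d) F :=
  ((variants m).map fun m' => monProd F d 0 0 m').sum

/-- The coefficient function of an element of the free nonunital nonassociative algebra. -/
def coeffOf {F : Type*} [Semiring F] {n : ℕ}
    (f : FreeNonUnitalNonAssocAlgebra F (Fin n)) : FreeMagma (Fin n) →₀ F := f.coeff

/-- Evaluation of an element of the free nonunital nonassociative algebra on `x_1, …, x_n` at
the tuple `b`, with `mul` as the product of the target: the linear extension of
`m ↦ evalWith mul b m`, i.e. the unique nonunital `F`-algebra homomorphism sending
`x_i ↦ b i` into `(A, mul)`. -/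
def evalNAWith {F : Type*} [Semiring F] {n : ℕ} {A : Type*}
    [AddCommMonoid A] [Module F A] (mul : A → A → A) (b : Fin n → A)
    (f : FreeNonUnitalNonAssocAlgebra F (Fin n)) : A :=
  Finsupp.sum (coeffOf f) fun m c => c • evalWith mul b m

/-- Evaluation of an element of the free nonunital nonassociative algebra at a tuple `b` of
elements of a (not necessarily unital/associative) algebra `A`: the unique nonunital
`F`-algebra homomorphism sending `x_i ↦ b i`. -/
def evalNA {F : Type*} [Semiring F] {n : ℕ} {A : Type*}
    [AddCommMonoid A] [Mul A] [Module F A] (b : Fin n → A)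
    (f : FreeNonUnitalNonAssocAlgebra F (Fin n)) : A :=
  evalNAWith (· * ·) b f

/-- Evaluation of an element of the unitization of the free nonunital nonassociative algebra
at a tuple `b` of elements of the unitization of `A`: the unique unital `F`-algebra
homomorphism sending `x_i ↦ b i` (and the adjoined unit to the unit). -/
def evalUnit {F : Type*} [CommSemiring F] {n : ℕ} {A : Type*}
    [AddCommMonoid A] [Mul A] [Module F A] (b : Fin n → Unitization F A)
    (f : Unitization F (FreeNonUnitalNonAssocAlgebra F (Fin n))) : Unitization F A :=
  Unitization.inl f.fst + evalNA b f.snd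

/-- The commutativity congruence on the free magma: the smallest equivalence relation with
`m₁ * m₂ ≈ m₂ * m₁` and compatible with the product. -/
inductive CommEq {n : ℕ} : FreeMagma (Fin n) → FreeMagma (Fin n) → Prop
  | refl (m : FreeMagma (Fin n)) : CommEq m m
  | symm {a b : FreeMagma (Fin n)} : CommEq a b → CommEq b a
  | trans {a b c : FreeMagma (Fin n)} : CommEq a b → CommEq b c → CommEq a c
  | comm (a b : FreeMagma (Fin n)) : CommEq (a * b) (b * a)
  | mul_congr {a a' b b' : FreeMagma (Fin n)} :
      CommEq a a' → CommEq b b' → CommEq (a * b) (a' * b')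

/-- The basis monomial `m` of the free nonunital nonassociative algebra. -/
def single1 (F : Type*) [Semiring F] {n : ℕ} (m : FreeMagma (Fin n)) :
    FreeNonUnitalNonAssocAlgebra F (Fin n) :=
  MonoidAlgebra.ofCoeff (Finsupp.single m 1 : FreeMagma (Fin n) →₀ F)

/-- `I_comm`: the `F`-linear span of `{m − m' : m ≈ m'}` inside the free nonunital
nonassociative algebra. -/
def Icomm (F : Type*) [Field F] (n : ℕ) :
    Submodule F (FreeNonUnitalNonAssocAlgebra F (Fin n)) :=
  Submodule.span F
    {x | ∃ m m' : FreeMagma (Fin n), CommEq m m' ∧ x = single1 F m - single1 F m'}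


variable {n : ℕ}

@[simp] lemma degM_mul (x y : FreeMagma (Fin n)) : degM (x * y) = degM x + degM y := rfl

@[simp] lemma depthM_mul (x y : FreeMagma (Fin n)) :
    depthM (x * y) = max (depthM x) (depthM y) + 1 := rfl

@[simp] lemma leafData_mul (x y : FreeMagma (Fin n)) (s : ℕ) :
    leafData (x * y) s = leafData x (s + 1) ++ leafData y (s + 1) := rfl

@[simp] lemma evalWith_mul {A : Type*} (mul : A → A → A) (b : Fin n → A)
    (x y : FreeMagma (Fin n)) :
    evalWith mul b (x * y) = mul (evalWith mul b x) (evalWith mul b y) := rfl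

lemma one_le_degM (m : FreeMagma (Fin n)) : 1 ≤ degM m := by
  induction m with
  | ih1 => rfl
  | ih2 x y ihx _ => simp only [degM_mul]; omega

lemma one_le_depthM (m : FreeMagma (Fin n)) : 1 ≤ depthM m := by
  cases m <;> simp [depthM]

lemma depthM_le_degM (m : FreeMagma (Fin n)) : depthM m ≤ degM m := by
  induction m with
  | ih1 => rfl
  | ih2 x y ihx ihy =>
    have := one_le_degM x
    have := one_le_degM y
    simp only [depthM_mul, degM_mul]
    omega

lemma CommEq.degM_eq {m m' : FreeMagma (Fin n)} (h : CommEq m m') : degM m = degM m' := by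
  induction h with
  | refl => rfl
  | symm _ ih => exact ih.symm
  | trans _ _ ih₁ ih₂ => exact ih₁.trans ih₂
  | comm a b => simp [add_comm]
  | mul_congr _ _ ih₁ ih₂ => simp [ih₁, ih₂]

lemma length_leafData (m : FreeMagma (Fin n)) (s : ℕ) : (leafData m s).length = degM m := by
  induction m generalizing s with
  | ih1 => rfl
  | ih2 x y ihx ihy => simp [ihx, ihy]

def kraftSum (L : List (Fin n × ℕ)) : ℚ := (L.map fun p => (2⁻¹ : ℚ) ^ p.2).sum

lemma kraftSum_append (L L' : List (Fin n × ℕ)) :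
    kraftSum (L ++ L') = kraftSum L + kraftSum L' := by
  simp [kraftSum]

lemma kraftSum_leafData (m : FreeMagma (Fin n)) (s : ℕ) :
    kraftSum (leafData m s) = (2⁻¹ : ℚ) ^ s := by
  induction m generalizing s with
  | ih1 => simp [kraftSum, leafData]
  | ih2 x y ihx ihy =>
    rw [leafData_mul, kraftSum_append, ihx, ihy, pow_succ]
    ring

lemma eq_nil_of_kraftSum_eq_zero {L : List (Fin n × ℕ)} (h : kraftSum L = 0) : L = [] := by
  obtain _ | ⟨p, L⟩ := L
  · rfl
  · have : 0 ≤ kraftSum L :=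
      List.sum_nonneg fun _ hq => by obtain ⟨q, -, rfl⟩ := List.mem_map.1 hq; positivity
    simp only [kraftSum, List.map_cons, List.sum_cons] at h this
    have : 0 < (2⁻¹ : ℚ) ^ p.2 := by positivity
    linarith

lemma eq_nil_of_leafData_append_eq {x x' : FreeMagma (Fin n)} {s : ℕ}
    {M : List (Fin n × ℕ)} (h : leafData x s ++ M = leafData x' s) : M = [] := by
  apply eq_nil_of_kraftSum_eq_zero
  have := congrArg kraftSum h
  rw [kraftSum_append, kraftSum_leafData, kraftSum_leafData] at this
  linarith

lemma degM_eq_of_leafData_eq {m m' : FreeMagma (Fin n)} {s : ℕ}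
    (h : leafData m s = leafData m' s) : degM m = degM m' := by
  simpa [length_leafData] using congrArg List.length h

lemma leafData_inj {m m' : FreeMagma (Fin n)} {s : ℕ} (h : leafData m s = leafData m' s) :
    m = m' := by
  induction m generalizing m' s with
  | ih1 i =>
    cases m' with
    | of i' => simp_all [leafData]
    | mul x y =>
      have : 1 = degM x + degM y := degM_eq_of_leafData_eq h
      have := one_le_degM x
      have := one_le_degM y
      omega
  | ih2 x y ihx ihy =>
    cases m' with
    | of i' =>
      have : degM x + degM y = 1 := degM_eq_of_leafData_eq h
      have := one_le_degM x
      have := one_le_degM y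
      omega
    | mul x' y' =>
      change leafData x (s + 1) ++ leafData y (s + 1)
        = leafData x' (s + 1) ++ leafData y' (s + 1) at h
      have hx : leafData x (s + 1) = leafData x' (s + 1) := by
        obtain ⟨M, hM, -⟩ | ⟨M, hM, -⟩ := List.append_eq_append_iff.1 h
        · rw [hM, eq_nil_of_leafData_append_eq hM.symm, List.append_nil]
        · rw [hM, eq_nil_of_leafData_append_eq hM.symm, List.append_nil]
      rw [hx] at h
      rw [ihx hx, ihy (List.append_cancel_left h)]
      rfl

/-- The exponent vector of `∏ z_{i,t,l}` over the leaves of `m`, the leaf `x_i` being the `t`-th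
leaf counted from `j` and sitting at level `l` below a root at level `k`. -/
def leafCode : ℕ → ℕ → FreeMagma (Fin n) → (Fin n × ℕ × ℕ →₀ ℕ)
  | j, k, .of i => Finsupp.single (i, j, k) 1
  | j, k, .mul x y => leafCode j (k + 1) x + leafCode (j + degM x) (k + 1) y

def listCode : List (Fin n × ℕ) → ℕ → (Fin n × ℕ × ℕ →₀ ℕ)
  | [], _ => 0
  | p :: L, t => Finsupp.single (p.1, t, p.2) 1 + listCode L (t + 1)

lemma listCode_append (L L' : List (Fin n × ℕ)) (t : ℕ) :
    listCode (L ++ L') t = listCode L t + listCode L' (t + L.length) := by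
  induction L generalizing t with
  | nil => simp [listCode]
  | cons p L ih => simp [listCode, ih, add_assoc, add_comm 1]

lemma leafCode_eq_listCode (j k : ℕ) (m : FreeMagma (Fin n)) :
    leafCode j k m = listCode (leafData m k) j := by
  induction m generalizing j k with
  | ih1 => simp [leafCode, leafData, listCode]
  | ih2 x y ihx ihy =>
    rw [leafData_mul, listCode_append, length_leafData, ← ihx, ← ihy]
    rfl

lemma listCode_apply_of_lt (L : List (Fin n × ℕ)) {t : ℕ} {q : Fin n × ℕ × ℕ}
    (hq : q.2.1 < t) : listCode L t q = 0 := by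
  induction L generalizing t with
  | nil => rfl
  | cons p L ih =>
    simp only [listCode, Finsupp.add_apply, ih (Nat.lt_succ_of_lt hq), Finsupp.single_apply]
    grind

lemma listCode_inj {L L' : List (Fin n × ℕ)} {t : ℕ} (hlen : L.length = L'.length)
    (h : listCode L t = listCode L' t) : L = L' := by
  induction L generalizing L' t with
  | nil => exact (List.length_eq_zero_iff.1 hlen.symm).symm
  | cons p L ih =>
    obtain _ | ⟨p', L'⟩ := L'
    · simp at hlen
    · have hp := DFunLike.congr_fun h (p.1, t, p.2)
      have hlt : ((p.1, t, p.2) : Fin n × ℕ × ℕ).2.1 < t + 1 := Nat.lt_succ_self t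
      simp only [listCode, Finsupp.add_apply, Finsupp.single_eq_same, listCode_apply_of_lt _ hlt,
        Finsupp.single_apply] at hp
      have hpp : p' = p := by
        by_contra hne
        rw [if_neg (by grind)] at hp
        simp at hp
      subst hpp
      exact congrArg _ (ih (Nat.succ.inj hlen) (add_left_cancel h))

lemma leafCode_inj {m m' : FreeMagma (Fin n)} {j k : ℕ} (hdeg : degM m = degM m')
    (h : leafCode j k m = leafCode j k m') : m = m' := by
  rw [leafCode_eq_listCode, leafCode_eq_listCode] at h
  exact leafData_inj (listCode_inj (by simp [length_leafData, hdeg]) h)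

@[simp] lemma variants_mul (x y : FreeMagma (Fin n)) :
    variants (x * y) = (variants x).bind fun x' => (variants y).bind fun y' =>
      {x' * y', y' * x'} := rfl

lemma mem_variants_self (m : FreeMagma (Fin n)) : m ∈ variants m := by
  induction m with
  | ih1 => simp [variants]
  | ih2 x y ihx ihy => simpa using Or.inl ⟨x, ihx, y, ihy, rfl⟩

lemma CommEq.of_mem_variants {m m' : FreeMagma (Fin n)} (h : m' ∈ variants m) : CommEq m m' := by
  induction m generalizing m' with
  | ih1 => simp_all [variants, CommEq.refl]
  | ih2 x y ihx ihy =>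
    obtain ⟨x', hx', y', hy', rfl⟩ | ⟨x', hx', y', hy', rfl⟩ := by simpa using h
    · exact .mul_congr (ihx hx') (ihy hy')
    · exact .trans (.mul_congr (ihx hx') (ihy hy')) (.comm x' y')

lemma CommEq.variants_eq {m m' : FreeMagma (Fin n)} (h : CommEq m m') :
    variants m = variants m' := by
  induction h with
  | refl => rfl
  | symm _ ih => exact ih.symm
  | trans _ _ ih₁ ih₂ => exact ih₁.trans ih₂
  | comm a b =>
    rw [variants_mul, variants_mul, Multiset.bind_bind]
    congr 1; funext y'; congr 1; funext x'
    exact Multiset.cons_swap _ _ _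
  | mul_congr _ _ ih₁ ih₂ => rw [variants_mul, variants_mul, ih₁, ih₂]

open scoped Classical in
lemma count_variants (m m₀ : FreeMagma (Fin n)) :
    (variants m).count m₀ = if CommEq m m₀ then (variants m₀).count m₀ else 0 := by
  split_ifs with h
  · rw [h.variants_eq]
  · exact Multiset.count_eq_zero.2 fun hm₀ => h (.of_mem_variants hm₀)

lemma evalWith_symm_eq_sum_variants {A : Type*} [NonUnitalNonAssocSemiring A] (b : Fin n → A)
    (m : FreeMagma (Fin n)) :
    evalWith (fun x y => x * y + y * x) b m = ((variants m).map (evalWith (· * ·) b)).sum := by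
  induction m with
  | ih1 => simp [evalWith, variants]
  | ih2 x y ihx ihy =>
    rw [evalWith_mul, ihx, ihy, variants_mul, Multiset.map_bind, Multiset.sum_bind]
    simp [Function.comp_def, Multiset.sum_map_add, Multiset.sum_map_mul_left,
      Multiset.sum_map_mul_right]

namespace Arr

variable {d : ℕ} {R : Type*}

section AddCommGroup

variable [AddCommGroup R]

@[simp] lemma zero_apply (i j : Fin (d + 1)) (k : Fin d) : (0 : Arr d R) i j k = 0 := rfl

@[simp] lemma add_apply (x y : Arr d R) (i j : Fin (d + 1)) (k : Fin d) :
    (x + y) i j k = x i j k + y i j k := rfl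

@[simp] lemma smul_apply {S : Type*} [Semiring S] [Module S R] (c : S) (x : Arr d R)
    (i j : Fin (d + 1)) (k : Fin d) : (c • x) i j k = c • x i j k := rfl

def entry (i j : Fin (d + 1)) (k : Fin d) : Arr d R →+ R where
  toFun x := x i j k
  map_zero' := rfl
  map_add' _ _ := rfl

lemma sum_apply {ι : Type*} (s : Finset ι) (x : ι → Arr d R) (i j : Fin (d + 1)) (k : Fin d) :
    (∑ t ∈ s, x t) i j k = ∑ t ∈ s, x t i j k :=
  map_sum (entry i j k) x s

end AddCommGroup

variable [CommRing R]

lemma mul_apply (x y : Arr d R) (i j : Fin (d + 1)) (k : Fin d) :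
    (x * y) i j k = if h : (k : ℕ) + 1 < d then
      ∑ l : Fin (d + 1), x i l ⟨(k : ℕ) + 1, h⟩ * y l j ⟨(k : ℕ) + 1, h⟩ else 0 := rfl

instance instNonUnitalNonAssocRing : NonUnitalNonAssocRing (Arr d R) where
  left_distrib x y z := by
    funext i j k
    simp only [mul_apply, add_apply]
    split_ifs <;> simp [mul_add, Finset.sum_add_distrib]
  right_distrib x y z := by
    funext i j k
    simp only [mul_apply, add_apply]
    split_ifs <;> simp [add_mul, Finset.sum_add_distrib]
  zero_mul x := by
    funext i j k
    simp only [mul_apply, zero_apply]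
    split_ifs <;> simp
  mul_zero x := by
    funext i j k
    simp only [mul_apply, zero_apply]
    split_ifs <;> simp

/-- The generic element `Z_i` of the paper, with the variables `z_{i,j,k}` indexed by `ℕ` rather
than `Fin d` so that no range side conditions arise. -/
def generic (F : Type*) [CommRing F] (d : ℕ) (i : Fin n) :
    Arr d (MvPolynomial (Fin n × ℕ × ℕ) F) :=
  fun j j' k => if (j' : ℕ) = j + 1 then MvPolynomial.X (i, j, k) else 0

lemma evalWith_generic_apply {F : Type*} [CommRing F] (m : FreeMagma (Fin n))
    (j j' : Fin (d + 1)) (k : Fin d) (hj : j + degM m ≤ d) (hk : k + depthM m ≤ d) :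
    evalWith (· * ·) (generic F d) m j j' k =
      if (j' : ℕ) = j + degM m then MvPolynomial.monomial (leafCode j k m) 1 else 0 := by
  induction m generalizing j j' k with
  | ih1 i => rfl
  | ih2 x y ihx ihy =>
    simp only [depthM_mul, degM_mul] at hj hk
    have := one_le_degM y
    have := one_le_depthM x
    have := one_le_depthM y
    have hk1 : (k : ℕ) + 1 < d := by omega
    let l₀ : Fin (d + 1) := ⟨j + degM x, by omega⟩
    have hx (l) := ihx j l ⟨k + 1, hk1⟩ (by omega) (by simp only; omega)
    rw [evalWith_mul, mul_apply, dif_pos hk1, Fintype.sum_eq_single l₀]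
    · rw [hx, if_pos rfl, ihy l₀ j' ⟨k + 1, hk1⟩ (by simp only [l₀]; omega) (by simp only; omega)]
      simp only [l₀, mul_ite, mul_zero, MvPolynomial.monomial_mul, mul_one, add_assoc]
      rfl
    · intro l hl
      rw [hx, if_neg (fun h => hl (Fin.ext h)), zero_mul]

end Arr

lemma evalWith_comp {A B : Type*} {mulA : A → A → A} {mulB : B → B → B} (g : A → B)
    (hg : ∀ a a', g (mulA a a') = mulB (g a) (g a')) (b : Fin n → A) (m : FreeMagma (Fin n)) :
    evalWith mulB (g ∘ b) m = g (evalWith mulA b m) := by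
  induction m with
  | ih1 => rfl
  | ih2 x y ihx ihy => rw [evalWith_mul, evalWith_mul, ihx, ihy, hg]

section Evaluation

variable {F : Type*} [CommSemiring F] {A B : Type*} [AddCommMonoid A] [AddCommMonoid B]
  [Module F A] [Module F B]

lemma evalNAWith_comp {mulA : A → A → A} {mulB : B → B → B} (g : A →ₗ[F] B)
    (hg : ∀ a a', g (mulA a a') = mulB (g a) (g a')) (b : Fin n → A)
    (f₀ : FreeNonUnitalNonAssocAlgebra F (Fin n)) :
    evalNAWith mulB (g ∘ b) f₀ = g (evalNAWith mulA b f₀) := by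
  simp [evalNAWith, map_finsuppSum, evalWith_comp g hg]

variable [Mul A] (w : Fin n → A) (f : Unitization F (FreeNonUnitalNonAssocAlgebra F (Fin n)))

lemma evalNA_inr (f₀ : FreeNonUnitalNonAssocAlgebra F (Fin n)) :
    evalNA (fun i => (w i : Unitization F A)) f₀ = ((evalNA w f₀ : A) : Unitization F A) :=
  evalNAWith_comp (Unitization.inrHom F F A) (Unitization.inr_mul F) w f₀

lemma fst_evalUnit_inr : (evalUnit (fun i => (w i : Unitization F A)) f).fst = f.fst := by
  simp [evalUnit, evalNA_inr]

lemma snd_evalUnit_inr : (evalUnit (fun i => (w i : Unitization F A)) f).snd = evalNA w f.snd := by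
  simp [evalUnit, evalNA_inr]

end Evaluation

namespace Arr

variable {d : ℕ} {F R S : Type*} [CommSemiring F] [CommRing R] [CommRing S] [Algebra F R]
  [Algebra F S]

def mapₗ (φ : R →ₐ[F] S) : Arr d R →ₗ[F] Arr d S where
  toFun x i j k := φ (x i j k)
  map_add' _ _ := by funext i j k; exact map_add φ _ _
  map_smul' _ _ := by funext i j k; exact map_smul φ _ _

@[simp] lemma mapₗ_apply (φ : R →ₐ[F] S) (x : Arr d R) (i j : Fin (d + 1)) (k : Fin d) :
    mapₗ φ x i j k = φ (x i j k) := rfl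

lemma mapₗ_mul (φ : R →ₐ[F] S) (x y : Arr d R) : mapₗ φ (x * y) = mapₗ φ x * mapₗ φ y := by
  funext i j k
  change φ ((x * y) i j k) = (mapₗ φ x * mapₗ φ y) i j k
  simp only [mul_apply]
  split_ifs <;> simp

lemma evalNAWith_symm_mapₗ (φ : R →ₐ[F] S) (b : Fin n → Arr d R)
    (f₀ : FreeNonUnitalNonAssocAlgebra F (Fin n)) :
    evalNAWith (fun x y => x * y + y * x) (mapₗ φ ∘ b) f₀ =
      mapₗ φ (evalNAWith (fun x y => x * y + y * x) b f₀) :=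
  evalNAWith_comp _ (fun x y => by rw [map_add, mapₗ_mul, mapₗ_mul]) b f₀

end Arr

section Counting

open MvPolynomial

variable {F : Type*} [CommRing F] {d : ℕ} {m₀ : FreeMagma (Fin n)}

lemma coeff_evalWith_generic (hd : 0 < d) (hm₀ : degM m₀ ≤ d) {m : FreeMagma (Fin n)}
    (hm : degM m ≤ d) :
    coeff (leafCode 0 0 m₀)
        (evalWith (· * ·) (Arr.generic F d) m 0 ⟨degM m₀, by omega⟩ ⟨0, hd⟩) =
      if m = m₀ then 1 else 0 := by
  rw [Arr.evalWith_generic_apply m _ _ _ (by simpa) (by simpa using (depthM_le_degM m).trans hm)]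
  by_cases hdeg : degM m₀ = degM m
  · by_cases h : m = m₀
    · simp [h]
    · simp [hdeg, coeff_monomial, h, mt (leafCode_inj hdeg.symm) h]
  · simp [hdeg, show m ≠ m₀ by rintro rfl; exact hdeg rfl]

lemma coeff_evalWith_symm_generic (hd : 0 < d) (hm₀ : degM m₀ ≤ d) {m : FreeMagma (Fin n)}
    (hm : degM m ≤ d) :
    coeff (leafCode 0 0 m₀) (evalWith (fun a b => a * b + b * a) (Arr.generic F d) m
        0 ⟨degM m₀, by omega⟩ ⟨0, hd⟩) = (variants m).count m₀ := by
  let ℓ : Arr d (MvPolynomial (Fin n × ℕ × ℕ) F) →+ F :=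
    (coeffAddMonoidHom (leafCode 0 0 m₀)).comp (Arr.entry 0 ⟨degM m₀, by omega⟩ ⟨0, hd⟩)
  calc _ = ℓ ((variants m).map (evalWith (· * ·) (Arr.generic F d))).sum := by
        rw [← evalWith_symm_eq_sum_variants]; rfl
    _ = ((variants m).map fun m' => ℓ (evalWith (· * ·) (Arr.generic F d) m')).sum := by
        rw [map_multiset_sum, Multiset.map_map]; rfl
    _ = ((variants m).map fun m' => if m' = m₀ then (1 : F) else 0).sum := by
        refine congrArg _ (Multiset.map_congr rfl fun m' hm' => ?_)
        exact coeff_evalWith_generic hd hm₀ ((CommEq.of_mem_variants hm').degM_eq ▸ hm)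
    _ = _ := by
        rw [Multiset.sum_map_eq_nsmul_single m₀ (fun m' hm' _ => if_neg hm')]
        simp

open scoped Classical in
lemma coeff_evalNAWith_symm_generic (hd : 0 < d) (hm₀ : degM m₀ ≤ d)
    (f₀ : FreeNonUnitalNonAssocAlgebra F (Fin n))
    (hdeg : ∀ m ∈ (coeffOf f₀).support, degM m ≤ d) :
    coeff (leafCode 0 0 m₀) (evalNAWith (fun a b => a * b + b * a) (Arr.generic F d) f₀
        0 ⟨degM m₀, by omega⟩ ⟨0, hd⟩) =
      (variants m₀).count m₀ * ∑ m ∈ (coeffOf f₀).support with CommEq m m₀, coeffOf f₀ m := by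
  simp only [evalNAWith, Finsupp.sum, Arr.sum_apply, Arr.smul_apply, coeff_sum, coeff_smul,
    smul_eq_mul, Finset.sum_filter, Finset.mul_sum]
  refine Finset.sum_congr rfl fun m hm => ?_
  rw [coeff_evalWith_symm_generic hd hm₀ (hdeg m hm), count_variants]
  split_ifs <;> simp [mul_comm]

end Counting

section CommIdeal

variable {F : Type*} [Field F]

def commSetoid (n : ℕ) : Setoid (FreeMagma (Fin n)) := ⟨CommEq, ⟨.refl, .symm, .trans⟩⟩

lemma ofCoeff_sub_ofCoeff_mapDomain_mem_Icomm {g : FreeMagma (Fin n) → FreeMagma (Fin n)}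
    (hg : ∀ m, CommEq m (g m)) (c : FreeMagma (Fin n) →₀ F) :
    MonoidAlgebra.ofCoeff c - MonoidAlgebra.ofCoeff (c.mapDomain g) ∈ Icomm F n := by
  induction c using Finsupp.induction_linear with
  | zero => simp
  | add c c' hc hc' =>
    rw [Finsupp.mapDomain_add, MonoidAlgebra.ofCoeff_add, MonoidAlgebra.ofCoeff_add,
      add_sub_add_comm]
    exact add_mem hc hc'
  | single m a =>
    have : MonoidAlgebra.ofCoeff (.single m a) - MonoidAlgebra.ofCoeff (.single (g m) a) =
        a • (single1 F m - single1 F (g m)) := by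
      simp [single1, smul_sub]
    rw [Finsupp.mapDomain_single, this]
    exact Submodule.smul_mem _ _ (Submodule.subset_span ⟨m, g m, hg m, rfl⟩)

open scoped Classical in
/-- Modulo `I_comm` every monomial may be replaced by a fixed representative of its class. -/
lemma exists_classSum_ne_zero_of_notMem_Icomm {f₀ : FreeNonUnitalNonAssocAlgebra F (Fin n)}
    (h : f₀ ∉ Icomm F n) :
    ∃ m₀, ∑ m ∈ (coeffOf f₀).support with CommEq m m₀, coeffOf f₀ m ≠ 0 := by
  by_contra! hsum
  let s := commSetoid n
  have hclass : (coeffOf f₀).mapDomain (Quotient.mk s) = 0 := by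
    ext q
    induction q using Quotient.inductionOn with
    | h m₀ =>
      rw [Finsupp.mapDomain_apply_eq_sum, Finsupp.zero_apply, ← hsum m₀]
      simp only [Quotient.eq]
      rfl
  have := ofCoeff_sub_ofCoeff_mapDomain_mem_Icomm (g := Quotient.out ∘ Quotient.mk s)
    (fun m => Setoid.symm (Quotient.mk_out (s := s) m)) (coeffOf f₀)
  rw [Finsupp.mapDomain_comp, hclass, Finsupp.mapDomain_zero, MonoidAlgebra.ofCoeff_zero,
    sub_zero] at this
  exact h this

end CommIdeal

lemma evalNA_mapₗ_comp {F R : Type*} [CommRing F] [CommRing R] [Algebra F R] {d : ℕ}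
    (φ : R →ₐ[F] F) (b : Fin n → Arr d R) (f₀ : FreeNonUnitalNonAssocAlgebra F (Fin n)) :
    evalNA (A := CArr d F) (Arr.mapₗ φ ∘ b) f₀ =
      Arr.mapₗ φ (evalNAWith (fun x y => x * y + y * x) b f₀) :=
  Arr.evalNAWith_symm_mapₗ φ b f₀

lemma exists_evalNA_ne_zero_of_generic {F : Type*} [Field F] [Infinite F] {d : ℕ}
    {f₀ : FreeNonUnitalNonAssocAlgebra F (Fin n)} {i j : Fin (d + 1)} {k : Fin d}
    (h : evalNAWith (fun a b => a * b + b * a) (Arr.generic F d) f₀ i j k ≠ 0) :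
    ∃ w : Fin n → CArr d F, evalNA w f₀ ≠ 0 := by
  set P := evalNAWith (fun a b => a * b + b * a) (Arr.generic F d) f₀
  obtain ⟨z, hz⟩ : ∃ z, MvPolynomial.eval z (P i j k) ≠ 0 := by
    by_contra! h'
    exact h (MvPolynomial.funext (by simpa using h'))
  refine ⟨Arr.mapₗ (MvPolynomial.aeval z) ∘ Arr.generic F d, fun h0 => hz ?_⟩
  rw [evalNA_mapₗ_comp] at h0
  calc MvPolynomial.eval z (P i j k) = Arr.mapₗ (MvPolynomial.aeval z) P i j k := by simp
    _ = 0 := congrArg (fun x : Arr d F => x i j k) h0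

lemma exists_evalNAWith_generic_ne_zero {F : Type*} [Field F] [CharZero F] {d : ℕ} (hd : 1 ≤ d)
    {f₀ : FreeNonUnitalNonAssocAlgebra F (Fin n)}
    (hdeg : ∀ m ∈ (coeffOf f₀).support, degM m ≤ d) (hI : f₀ ∉ Icomm F n) :
    ∃ j k, evalNAWith (fun a b => a * b + b * a) (Arr.generic F d) f₀ 0 j k ≠ 0 := by
  classical
  obtain ⟨m₀, hm₀⟩ := exists_classSum_ne_zero_of_notMem_Icomm hI
  obtain ⟨m, hm, -⟩ := Finset.exists_ne_zero_of_sum_ne_zero hm₀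
  obtain ⟨hm, hmm₀⟩ := Finset.mem_filter.1 hm
  have hdeg₀ : degM m₀ ≤ d := hmm₀.degM_eq ▸ hdeg m hm
  refine ⟨⟨degM m₀, by omega⟩, ⟨0, hd⟩, fun h0 => ?_⟩
  have hcoeff := coeff_evalNAWith_symm_generic hd hdeg₀ f₀ hdeg
  rw [h0, MvPolynomial.coeff_zero] at hcoeff
  have hcount : (variants m₀).count m₀ ≠ 0 := Multiset.count_ne_zero.2 (mem_variants_self m₀)
  exact mul_ne_zero (Nat.cast_ne_zero.2 hcount) hm₀ hcoeff.symm

theorem not_PI_for_Cd_general {F : Type*} [Field F] [CharZero F] (n d : ℕ) (hd : 1 ≤ d)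
    (f : Unitization F (FreeNonUnitalNonAssocAlgebra F (Fin n)))
    (hdeg : ∀ m ∈ (coeffOf f.snd).support, degM m ≤ d)
    (hI : f.snd ∉ Icomm F n ∨ f.fst ≠ 0) :
    ∃ b : Fin n → Unitization F (CArr d F), evalUnit b f ≠ 0 := by
  rcases hI with hI | hI
  · obtain ⟨j, k, hjk⟩ := exists_evalNAWith_generic_ne_zero hd hdeg hI
    obtain ⟨w, hw⟩ := exists_evalNA_ne_zero_of_generic hjk
    refine ⟨fun i => w i, fun h => hw ?_⟩
    rw [← snd_evalUnit_inr, h, Unitization.snd_zero]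
  · refine ⟨fun _ => (0 : CArr d F), fun h => hI ?_⟩
    rw [← fst_evalUnit_inr (fun _ => (0 : CArr d F)), h, Unitization.fst_zero]

/-- Lemma 3.6 / `lowerBound2`.  Let `F` be a field of characteristic `0`
and `n, d ≥ 1`.  Let `f` be a nonzero element of the unitization of `F_{Ā,C̄}[X]` whose
`F_{Ā,C̄}[X]`-component `f₀` has degree `≤ d` and satisfies `f₀ ∉ I_comm`, or whose scalar
component is nonzero (i.e. the image of `f` in the unitization of `F_{Ā,C}[X]` is nonzero).
Then `f` is not a polynomial identity for the commutative nonassociative unital algebra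
`C_d = Unitization F (C'_d(F))`: there exist `b_1, …, b_n ∈ C_d` such that the evaluation of
`f` at `(b_1, …, b_n)` (via the unique unital `F`-algebra homomorphism sending `x_i ↦ b_i`
and the adjoined unit to the unit of `C_d`) is nonzero. -/
theorem not_PI_for_Cd {F : Type*} [Field F] [CharZero F] (n d : ℕ) (hn : 1 ≤ n) (hd : 1 ≤ d)
    (f : Unitization F (FreeNonUnitalNonAssocAlgebra F (Fin n))) (hf : f ≠ 0)
    (hdeg : ∀ m ∈ (coeffOf f.snd).support, degM m ≤ d)
    (hI : f.snd ∉ Icomm F n ∨ f.fst ≠ 0) :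
    ∃ b : Fin n → Unitization F (CArr d F), evalUnit b f ≠ 0 :=
  not_PI_for_Cd_general n d hd f hdeg hI

end NAPIT
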